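/- Let ρ : ℝ^{n₁} → ℝ^{n₂} be a smooth surjective map whose differential at every point of ℝ^{n₁} is surjective. Let Z₁ be a smooth submanifold of ℝ^{n₁} which is a union of fibres of ρ (i.e., whenever z ∈ Z₁ and w ∈ ℝ^{n₁} satisfy ρ(w) = ρ(z), then w ∈ Z₁). Then Z₂ := ρ(Z₁) is a smooth submanifold of ℝ^{n₂}; moreover, if Z₁ is closed in ℝ^{n₁}, then Z₂ is closed in ℝ^{n₂}. -/

import Mathlib

/-- A subset `Z` of a real normed space (such as `ℝ^k`) is a smooth submanifold if for
every `z ∈ Z` there exist an open neighborhood `U` of `z`, a natural number `d`, and a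
smooth map `φ : U → ℝ^d` whose differential is surjective at every point of `U`, such
that `Z ∩ U = φ ⁻¹' {0} ∩ U`. -/
def IsSmoothSubmanifold {E : Type*} [NormedAddCommGroup E] [NormedSpace ℝ E]
    (Z : Set E) : Prop :=
  ∀ z ∈ Z, ∃ (U : Set E) (d : ℕ) (φ : E → (Fin d → ℝ)),
    IsOpen U ∧ z ∈ U ∧ ContDiffOn ℝ (⊤ : ℕ∞) φ U ∧
    (∀ x ∈ U, ∃ φ' : E →L[ℝ] (Fin d → ℝ), HasFDerivAt φ φ' x ∧ Function.Surjective φ') ∧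
    Z ∩ U = φ ⁻¹' {0} ∩ U

open Function Set Filter Topology ContinuousLinearMap

/-- A surjective continuous linear map onto a finite-dimensional space has a
continuous linear right inverse. -/
lemma aux_exists_right_inverse {F G : Type*} [NormedAddCommGroup F] [NormedSpace ℝ F]
    [NormedAddCommGroup G] [NormedSpace ℝ G] [FiniteDimensional ℝ G] (T : F →L[ℝ] G)
    (hT : Surjective T) : ∃ R : G →L[ℝ] F, T.comp R = ContinuousLinearMap.id ℝ G := by
  obtain ⟨g, hg⟩ := T.toLinearMap.exists_rightInverse_of_surjective (LinearMap.range_eq_top.2 hT)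
  refine ⟨LinearMap.toContinuousLinearMap g, ?_⟩
  ext x
  exact LinearMap.ext_iff.1 hg x

/-- If `T ∘ R` is within distance 1 of the identity, then `T` is surjective. -/
lemma aux_surj_of_near {F G : Type*} [NormedAddCommGroup F] [NormedSpace ℝ F]
    [NormedAddCommGroup G] [NormedSpace ℝ G] [CompleteSpace G] (T : F →L[ℝ] G) (R : G →L[ℝ] F)
    (h : ‖ContinuousLinearMap.id ℝ G - T.comp R‖ < 1) : Surjective T := by
  have h' : ‖(1 : G →L[ℝ] G) - T.comp R‖ < 1 := by rwa [ContinuousLinearMap.one_def]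
  set u : (G →L[ℝ] G)ˣ := Units.oneSub _ h' with hu
  have huv : (u : G →L[ℝ] G) = T.comp R := by simp [hu, Units.oneSub]
  intro w
  refine ⟨R ((↑u⁻¹ : G →L[ℝ] G) w), ?_⟩
  have := congrArg (fun (A : G →L[ℝ] G) => A w) u.mul_inv
  simpa [huv, ContinuousLinearMap.mul_apply] using this

/-- Let `ρ : ℝ^{n₁} → ℝ^{n₂}` be a smooth surjective map which is a submersion
(its differential is everywhere surjective).  If `Z₁` is a smooth submanifold of
`ℝ^{n₁}` which is a union of fibres of `ρ`, then `Z₂ = ρ(Z₁)` is a smooth submanifold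
of `ℝ^{n₂}`; moreover if `Z₁` is closed then so is `Z₂`. -/
theorem isSmoothSubmanifold_image {n₁ n₂ : ℕ} (ρ : (Fin n₁ → ℝ) → (Fin n₂ → ℝ))
    (hρ_smooth : ContDiff ℝ (⊤ : ℕ∞) ρ) (hρ_surj : Function.Surjective ρ)
    (hρ_subm : ∀ x, Function.Surjective (fderiv ℝ ρ x))
    (Z₁ : Set (Fin n₁ → ℝ)) (hZ₁ : IsSmoothSubmanifold Z₁)
    (hfib : ∀ z ∈ Z₁, ∀ w, ρ w = ρ z → w ∈ Z₁) :
    IsSmoothSubmanifold (ρ '' Z₁) ∧ (IsClosed Z₁ → IsClosed (ρ '' Z₁)) := by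
  have hρ_strict : ∀ x : Fin n₁ → ℝ, HasStrictFDerivAt ρ (fderiv ℝ ρ x) x := fun x =>
    hρ_smooth.contDiffAt.hasStrictFDerivAt (by simp)
  -- `ρ` is an open map
  have hρ_open : IsOpenMap ρ := by
    refine isOpenMap_iff_nhds_le.2 fun x => ?_
    exact ((hρ_strict x).map_nhds_eq_of_surj
      (LinearMap.range_eq_top.2 (hρ_subm x))).ge
  constructor
  · -- the submanifold part
    rintro y ⟨z, hz, hzy⟩
    obtain ⟨U, d, φ, hUopen, hzU, hφ, hφ', hZU⟩ := hZ₁ z hz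
    obtain ⟨φ'z, hφ'z, hφ'surj⟩ := hφ' z hzU
    set f' : (Fin n₁ → ℝ) →L[ℝ] (Fin n₂ → ℝ) := fderiv ℝ ρ z with hf'def
    have hf'surj : Surjective f' := hρ_subm z
    obtain ⟨g, hgid⟩ := aux_exists_right_inverse f' hf'surj
    have hg : ∀ w, f' (g w) = w := fun w => congrArg (fun A => A w) hgid
    have hρz : HasStrictFDerivAt ρ f' z := hρ_strict z
    -- Key step: `φ'z` vanishes on the kernel of `f'`
    have hker : ∀ v : Fin n₁ → ℝ, f' v = 0 → φ'z v = 0 := by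
      intro v hv
      set π : (Fin n₁ → ℝ) →L[ℝ] (Fin n₁ → ℝ) := ContinuousLinearMap.id ℝ (Fin n₁ → ℝ) - g.comp f' with hπdef
      set H : (Fin n₁ → ℝ) → (Fin n₁ → ℝ) := fun x => g (ρ x) + π x with hHdef
      have hHstrict : HasStrictFDerivAt H (g.comp f' + π) z :=
        (g.hasStrictFDerivAt.comp z hρz).add π.hasStrictFDerivAt
      have heq : g.comp f' + π = ((ContinuousLinearEquiv.refl ℝ (Fin n₁ → ℝ) : (Fin n₁ → ℝ) ≃L[ℝ] (Fin n₁ → ℝ)) : (Fin n₁ → ℝ) →L[ℝ] (Fin n₁ → ℝ)) := by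
        ext x; simp [hπdef]
      rw [heq] at hHstrict
      set Hinv : (Fin n₁ → ℝ) → (Fin n₁ → ℝ) := hHstrict.localInverse H _ z with hHinvdef
      set line : ℝ → (Fin n₁ → ℝ) := fun t => H z + t • v with hlinedef
      have hline0 : line 0 = H z := by simp [hlinedef]
      have hlineder : HasDerivAt line v 0 := by
        simpa [hlinedef] using ((hasDerivAt_id (0 : ℝ)).smul_const v).const_add (H z)
      have hc0 : Hinv (H z) = z := hHstrict.localInverse_apply_image
      have hcder : HasDerivAt (fun t => Hinv (line t)) v 0 := by
        have h1 : HasFDerivAt Hinv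
            (((ContinuousLinearEquiv.refl ℝ (Fin n₁ → ℝ)).symm : (Fin n₁ → ℝ) ≃L[ℝ] (Fin n₁ → ℝ)) : (Fin n₁ → ℝ) →L[ℝ] (Fin n₁ → ℝ)) (line 0) := by
          rw [hline0]; exact hHstrict.to_localInverse.hasFDerivAt
        have := h1.comp_hasDerivAt 0 hlineder
        simp at this; exact this
      have hlinet : Tendsto line (𝓝 0) (𝓝 (H z)) := by
        rw [← hline0]; exact hlineder.continuousAt
      have hev1 : ∀ᶠ t in 𝓝 (0 : ℝ), H (Hinv (line t)) = line t :=
        hlinet.eventually hHstrict.eventually_right_inverse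
      have hHf : ∀ x, f' (H x) = ρ x := by
        intro x; simp [hHdef, hπdef, hg, map_add, map_sub]
      have hev2 : ∀ᶠ t in 𝓝 (0 : ℝ), ρ (Hinv (line t)) = ρ z := by
        filter_upwards [hev1] with t ht
        calc ρ (Hinv (line t)) = f' (H (Hinv (line t))) := (hHf _).symm
          _ = f' (line t) := congrArg f' ht
          _ = ρ z := by simp [hlinedef, map_add, map_smul, hv, hHf]
      have hcont : ContinuousAt (fun t => Hinv (line t)) 0 := hcder.continuousAt
      have hc0' : (fun t => Hinv (line t)) 0 = z := by show Hinv (line 0) = z; rw [hline0]; exact hc0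
      have hev3 : ∀ᶠ t in 𝓝 (0 : ℝ), Hinv (line t) ∈ U := by
        have : U ∈ 𝓝 ((fun t => Hinv (line t)) 0) := by rw [hc0']; exact hUopen.mem_nhds hzU
        exact hcont.eventually_mem this
      have hev4 : (fun t => φ (Hinv (line t))) =ᶠ[𝓝 (0 : ℝ)] fun _ => (0 : Fin d → ℝ) := by
        filter_upwards [hev2, hev3] with t h2 h3
        have hmem : Hinv (line t) ∈ Z₁ := hfib z hz _ h2
        have : Hinv (line t) ∈ φ ⁻¹' {0} ∩ U := by rw [← hZU]; exact ⟨hmem, h3⟩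
        simpa using this.1
      have hder1 : HasDerivAt (fun t => φ (Hinv (line t))) (φ'z v) 0 := by
        have h4 : HasFDerivAt φ φ'z ((fun t => Hinv (line t)) 0) := by rw [hc0']; exact hφ'z
        exact h4.comp_hasDerivAt 0 hcder
      have hder2 : HasDerivAt (fun t => φ (Hinv (line t))) 0 0 :=
        (hasDerivAt_const (0 : ℝ) (0 : Fin d → ℝ)).congr_of_eventuallyEq hev4
      exact hder1.unique hder2
    have hkey : ∀ x : Fin n₁ → ℝ, φ'z (g (f' x)) = φ'z x := by
      intro x
      have h5 : f' (x - g (f' x)) = 0 := by simp [map_sub, hg]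
      have h6 := hker _ h5
      rw [map_sub] at h6
      exact (sub_eq_zero.1 h6).symm
    -- a smooth local section of `ρ` through `z`
    set Fm : (Fin n₂ → ℝ) → (Fin n₂ → ℝ) := fun w => ρ (z + g (w - y)) with hFmdef
    have hFsmooth : ContDiff ℝ (⊤ : ℕ∞) Fm :=
      hρ_smooth.comp (contDiff_const.add (g.contDiff.comp (contDiff_id.sub contDiff_const)))
    have hinnery : z + g (y - y) = z := by simp
    have hinner : HasStrictFDerivAt (fun w : Fin n₂ → ℝ => z + g (w - y)) g y := by
      have h1 : HasStrictFDerivAt (fun w : Fin n₂ → ℝ => w - y)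
          (ContinuousLinearMap.id ℝ (Fin n₂ → ℝ)) y := (hasStrictFDerivAt_id y).sub_const y
      have h2 := (g.hasStrictFDerivAt.comp y h1).const_add z
      simpa using h2
    have hFstrict : HasStrictFDerivAt Fm (f'.comp g) y := by
      have hρz' : HasStrictFDerivAt ρ f' ((fun w : Fin n₂ → ℝ => z + g (w - y)) y) := by
        simpa [hinnery] using hρz
      exact hρz'.comp y hinner
    have heq2 : f'.comp g =
        ((ContinuousLinearEquiv.refl ℝ (Fin n₂ → ℝ)) : (Fin n₂ → ℝ) →L[ℝ] (Fin n₂ → ℝ)) := by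
      ext w; simp [hg]
    rw [heq2] at hFstrict
    set Fh : OpenPartialHomeomorph (Fin n₂ → ℝ) (Fin n₂ → ℝ) :=
      hFstrict.toOpenPartialHomeomorph Fm with hFhdef
    have hFh_coe : ⇑Fh = Fm := hFstrict.toOpenPartialHomeomorph_coe
    have hysrc : y ∈ Fh.source := hFstrict.mem_toOpenPartialHomeomorph_source
    have hFmy : Fm y = y := by simp [hFmdef, hzy]
    have hytgt : y ∈ Fh.target := by
      have := hFstrict.image_mem_toOpenPartialHomeomorph_target
      rwa [hFmy] at this
    have hFhy : Fh y = y := by rw [congrFun hFh_coe y, hFmy]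
    have hsymm_y : Fh.symm y = y := by
      conv_lhs => rw [← hFhy]
      exact Fh.left_inv hysrc
    -- the set where the derivative of `Fm` is close to the identity
    set W : Set (Fin n₂ → ℝ) :=
      {w | ‖fderiv ℝ Fm w - ContinuousLinearMap.id ℝ (Fin n₂ → ℝ)‖ < 1} with hWdef
    have hWopen : IsOpen W :=
      isOpen_lt (((hFsmooth.continuous_fderiv (by simp)).sub continuous_const).norm)
        continuous_const
    have hfdFy : fderiv ℝ Fm y = ContinuousLinearMap.id ℝ (Fin n₂ → ℝ) := by
      rw [hFstrict.hasFDerivAt.fderiv]; rfl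
    have hyW : y ∈ W := by simp [hWdef, hfdFy]
    set V₀ : Set (Fin n₂ → ℝ) := Fh.target ∩ Fh.symm ⁻¹' W with hV₀def
    have hV₀open : IsOpen V₀ := by
      have := Fh.symm.isOpen_inter_preimage hWopen
      rwa [Fh.symm_source] at this
    have hyV₀ : y ∈ V₀ := ⟨hytgt, by rw [Set.mem_preimage, hsymm_y]; exact hyW⟩
    -- the inverse is smooth on `V₀`
    have hsymm_cd : ∀ b ∈ V₀, ContDiffAt ℝ (⊤ : ℕ∞) Fh.symm b := by
      intro b hb
      have hw : Fh.symm b ∈ W := hb.2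
      have hlt : ‖(1 : (Fin n₂ → ℝ) →L[ℝ] (Fin n₂ → ℝ)) - fderiv ℝ Fm (Fh.symm b)‖ < 1 := by
        rw [ContinuousLinearMap.one_def, norm_sub_rev]; exact hw
      set u : ((Fin n₂ → ℝ) →L[ℝ] (Fin n₂ → ℝ))ˣ := Units.oneSub _ hlt with hudef
      set ew : (Fin n₂ → ℝ) ≃L[ℝ] (Fin n₂ → ℝ) :=
        ContinuousLinearEquiv.unitsEquiv ℝ (Fin n₂ → ℝ) u with hewdef
      have hew : (ew : (Fin n₂ → ℝ) →L[ℝ] (Fin n₂ → ℝ)) = fderiv ℝ Fm (Fh.symm b) := by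
        ext x
        simp [hewdef, hudef, Units.oneSub, sub_sub_cancel]
      apply Fh.contDiffAt_symm hb.1 (f₀' := ew)
      · rw [hFh_coe, hew]
        exact (hFsmooth.differentiable (by simp) _).hasFDerivAt
      · rw [hFh_coe]
        exact hFsmooth.contDiffAt
    -- the section `s`
    set s : (Fin n₂ → ℝ) → (Fin n₁ → ℝ) := fun x => z + g (Fh.symm x - y) with hsdef
    have hρs : ∀ x ∈ Fh.target, ρ (s x) = x := by
      intro x hx
      have h7 : Fm (Fh.symm x) = x := by
        conv_rhs => rw [← Fh.right_inv hx]
        rw [congrFun hFh_coe (Fh.symm x)]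
      simpa [hFmdef, hsdef] using h7
    have hsy : s y = z := by simp [hsdef, hsymm_y]
    have hs_cd : ∀ b ∈ V₀, ContDiffAt ℝ (⊤ : ℕ∞) s b := fun b hb =>
      contDiffAt_const.add (g.contDiff.contDiffAt.comp b ((hsymm_cd b hb).sub contDiffAt_const))
    set V₁ : Set (Fin n₂ → ℝ) := V₀ ∩ s ⁻¹' U with hV₁def
    have hV₁open : IsOpen V₁ := by
      rw [isOpen_iff_mem_nhds]
      intro x hx
      exact Filter.inter_mem (hV₀open.mem_nhds hx.1)
        ((hs_cd x hx.1).continuousAt.preimage_mem_nhds (hUopen.mem_nhds hx.2))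
    have hyV₁ : y ∈ V₁ := ⟨hyV₀, by rw [Set.mem_preimage, hsy]; exact hzU⟩
    -- the defining function `ψ`
    set ψ : (Fin n₂ → ℝ) → (Fin d → ℝ) := fun x => φ (s x) with hψdef
    have hψ_cd : ∀ x ∈ V₁, ContDiffAt ℝ (⊤ : ℕ∞) ψ x := fun x hx =>
      (hφ.contDiffAt (hUopen.mem_nhds hx.2)).comp x (hs_cd x hx.1)
    have hψOn : ContDiffOn ℝ (⊤ : ℕ∞) ψ V₁ := fun x hx => (hψ_cd x hx).contDiffWithinAt
    have hfd_cont : ContinuousOn (fderiv ℝ ψ) V₁ :=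
      hψOn.continuousOn_fderiv_of_isOpen hV₁open (by simp)
    -- derivative of `ψ` at `y`
    have hsymm'y : HasFDerivAt Fh.symm (ContinuousLinearMap.id ℝ (Fin n₂ → ℝ)) y := by
      have h := hFstrict.to_localInverse
      rw [hFstrict.localInverse_def] at h
      rw [hFmy] at h
      have h' := h.hasFDerivAt
      simpa using h'
    have hs'y : HasFDerivAt s g y := by
      have h1 := hsymm'y.sub_const y
      have h2 := (g.hasFDerivAt.comp y h1).const_add z
      rw [ContinuousLinearMap.comp_id] at h2
      exact h2
    have hψ'y : HasFDerivAt ψ (φ'z.comp g) y := by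
      have h4 : HasFDerivAt φ φ'z (s y) := hsy.symm ▸ hφ'z
      exact h4.comp y hs'y
    have hψsurj_y : Surjective (φ'z.comp g) := by
      intro u
      obtain ⟨a, ha⟩ := hφ'surj u
      exact ⟨f' a, by rw [ContinuousLinearMap.comp_apply, hkey a]; exact ha⟩
    obtain ⟨R, hR⟩ := aux_exists_right_inverse _ hψsurj_y
    have hfψy : fderiv ℝ ψ y = φ'z.comp g := hψ'y.fderiv
    set N : (Fin n₂ → ℝ) → ℝ :=
      fun x => ‖(fderiv ℝ ψ x).comp R - ContinuousLinearMap.id ℝ (Fin d → ℝ)‖ with hNdef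
    have hcomp : ContinuousOn (fun x => (fderiv ℝ ψ x).comp R) V₁ :=
      hfd_cont.clm_comp continuousOn_const
    have hNcont : ContinuousOn N V₁ := (hcomp.sub continuousOn_const).norm
    set V : Set (Fin n₂ → ℝ) := V₁ ∩ N ⁻¹' Set.Iio 1 with hVdef
    have hVopen : IsOpen V := hNcont.isOpen_inter_preimage hV₁open isOpen_Iio
    have hyV : y ∈ V := ⟨hyV₁, by simp [hNdef, hfψy, hR]⟩
    refine ⟨V, d, ψ, hVopen, hyV, hψOn.mono Set.inter_subset_left, ?_, ?_⟩
    · intro x hx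
      refine ⟨fderiv ℝ ψ x, ((hψ_cd x hx.1).differentiableAt (by simp)).hasFDerivAt, ?_⟩
      apply aux_surj_of_near _ R
      have hx2 : N x < 1 := hx.2
      rw [norm_sub_rev]
      exact hx2
    · ext x
      simp only [Set.mem_inter_iff, Set.mem_preimage, Set.mem_singleton_iff]
      constructor
      · rintro ⟨⟨z', hz', hz'x⟩, hxV⟩
        refine ⟨?_, hxV⟩
        have hxt : x ∈ Fh.target := hxV.1.1.1
        have hsxU : s x ∈ U := hxV.1.2
        have hsxZ : s x ∈ Z₁ := hfib z' hz' (s x) (by rw [hρs x hxt]; exact hz'x.symm)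
        have h8 : s x ∈ φ ⁻¹' {0} ∩ U := hZU ▸ ⟨hsxZ, hsxU⟩
        simpa [hψdef] using h8.1
      · rintro ⟨hx0, hxV⟩
        have hxt : x ∈ Fh.target := hxV.1.1.1
        have hsxU : s x ∈ U := hxV.1.2
        have h9 : s x ∈ Z₁ ∩ U := by
          rw [hZU]
          exact ⟨by simpa [hψdef] using hx0, hsxU⟩
        exact ⟨⟨s x, h9.1, hρs x hxt⟩, hxV⟩
  · -- closedness
    intro hcl
    rw [← isOpen_compl_iff]
    have hcompl : (ρ '' Z₁)ᶜ = ρ '' Z₁ᶜ := by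
      ext w
      constructor
      · intro hw
        obtain ⟨x, hx⟩ := hρ_surj w
        refine ⟨x, fun hxZ => hw ⟨x, hxZ, hx⟩, hx⟩
      · rintro ⟨x, hx, rfl⟩ ⟨x', hx', hxx'⟩
        exact hx (hfib x' hx' x hxx'.symm)
    rw [hcompl]
    exact hρ_open _ hcl.isOpen_compl
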